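/- arXiv:2603.14510 — 2 statements merged into one kernel-verified Lean document; each statement's English description precedes it below -/
import Mathlib

section
/- Let (A_q) be a decreasing sequence of sets of integers that is uniformly bounded below, i.e., there exists an integer m₀ with every element of every A_q at least m₀. If A is the intersection of all A_q, then for every positive integer h, hA equals the intersection over q of hA_q. -/
open Pointwise

/-- The `h`-fold sumset: all sums of `h` not necessarily distinct elements of `S`
(for `h ≥ 1`; by convention `hfold 0 S = S`). -/
def hfold {α : Type*} [Add α] : ℕ → Set α → Set α
  | 0, S => S
  | 1, S => S
  | n + 2, S => hfold (n + 1) S + S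

lemma hfold_mono {α : Type*} [Add α] {S T : Set α} (hST : S ⊆ T) :
    ∀ h, hfold h S ⊆ hfold h T
  | 0 => hST
  | 1 => hST
  | n + 2 => Set.add_subset_add (hfold_mono hST (n + 1)) hST

lemma mem_hfold {S : Set ℤ} {y : ℤ} :
    ∀ h : ℕ, 1 ≤ h →
      (y ∈ hfold h S ↔ ∃ f : Fin h → ℤ, (∀ i, f i ∈ S) ∧ ∑ i, f i = y)
  | 1, _ => by
      constructor
      · intro hy
        exact ⟨fun _ => y, fun _ => hy, by simp⟩
      · rintro ⟨f, hf, hsum⟩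
        have : f 0 = y := by simpa using hsum
        exact this ▸ hf 0
  | n + 2, _ => by
      constructor
      · intro hy
        rcases Set.mem_add.1 hy with ⟨a, ha, b, hb, hab⟩
        rcases (mem_hfold (n + 1) (Nat.le_add_left 1 n)).1 ha with ⟨g, hg, hgsum⟩
        refine ⟨Fin.snoc g b, ?_, ?_⟩
        · intro i
          refine Fin.lastCases ?_ ?_ i
          · simpa using hb
          · intro j; simpa using hg j
        · rw [Fin.sum_univ_castSucc]
          simpa [hgsum] using hab
      · rintro ⟨f, hf, hsum⟩
        rw [Fin.sum_univ_castSucc] at hsum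
        refine Set.mem_add.2 ⟨∑ i : Fin (n + 1), f i.castSucc, ?_,
          f (Fin.last _), hf _, hsum⟩
        exact (mem_hfold (n + 1) (Nat.le_add_left 1 n)).2
          ⟨fun i => f i.castSucc, fun i => hf _, rfl⟩

theorem stmt1 (A : Set ℤ) (Aq : ℕ → Set ℤ) (m₀ : ℤ)
    (hdec : ∀ q, Aq (q + 1) ⊆ Aq q)
    (hbd : ∀ q, ∀ x ∈ Aq q, m₀ ≤ x)
    (hA : A = ⋂ q, Aq q) :
    ∀ h : ℕ, 1 ≤ h → hfold h A = ⋂ q, hfold h (Aq q) := by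
  intro h hh
  have hanti : ∀ {p q : ℕ}, p ≤ q → Aq q ⊆ Aq p := by
    intro p q hpq
    induction hpq with
    | refl => exact subset_rfl
    | step h ih => exact fun x hx => ih (hdec _ hx)
  apply Set.Subset.antisymm
  · refine Set.subset_iInter fun q => hfold_mono ?_ h
    exact hA ▸ Set.iInter_subset _ q
  · intro x hx
    simp only [Set.mem_iInter] at hx
    -- set of representing tuples
    set R : ℕ → Set (Fin h → ℤ) :=
      fun q => {f | (∀ i, f i ∈ Aq q) ∧ ∑ i, f i = x} with hR
    have hRne : ∀ q, (R q).Nonempty := by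
      intro q
      rcases (mem_hfold h hh).1 (hx q) with ⟨f, hf, hfs⟩
      exact ⟨f, hf, hfs⟩
    have hRanti : ∀ {p q : ℕ}, p ≤ q → R q ⊆ R p :=
      fun hpq f hf => ⟨fun i => hanti hpq (hf.1 i), hf.2⟩
    -- R 0 is finite
    have hbound : R 0 ⊆ Set.pi Set.univ (fun _ : Fin h => Set.Icc m₀ (x - (h - 1) * m₀)) := by
      rintro f ⟨hf, hfs⟩ i _
      refine ⟨hbd 0 _ (hf i), ?_⟩
      have h1 : f i = x - ∑ j ∈ Finset.univ.erase i, f j := by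
        have := Finset.add_sum_erase Finset.univ f (Finset.mem_univ i)
        omega
      have h2 : ((h : ℤ) - 1) * m₀ ≤ ∑ j ∈ Finset.univ.erase i, f j := by
        have := Finset.card_nsmul_le_sum (Finset.univ.erase i) f m₀
          (fun j _ => hbd 0 _ (hf j))
        have hcard : (Finset.univ.erase i).card = h - 1 := by
          simp [Finset.card_erase_of_mem]
        rw [hcard] at this
        have : ((h - 1 : ℕ) : ℤ) * m₀ ≤ ∑ j ∈ Finset.univ.erase i, f j := by
          simpa [nsmul_eq_mul] using this
        have hcast : ((h - 1 : ℕ) : ℤ) = (h : ℤ) - 1 := by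
          have : (1 : ℕ) ≤ h := hh
          omega
        rwa [hcast] at this
      omega
    have hfin : (R 0).Finite := by
      refine Set.Finite.subset ?_ hbound
      exact Set.Finite.pi (fun _ => Set.finite_Icc _ _)
    -- choose representatives and apply pigeonhole
    choose g hg using hRne
    have : Finite (R 0) := hfin
    let G : ℕ → R 0 := fun q => ⟨g q, hRanti (Nat.zero_le q) (hg q)⟩
    obtain ⟨y, hy⟩ := Finite.exists_infinite_fiber G
    rw [Set.infinite_coe_iff] at hy
    have hyall : ∀ q, (y : Fin h → ℤ) ∈ R q := by
      intro q
      obtain ⟨q', hq', hq'gt⟩ := hy.exists_gt q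
      have hGq' : G q' = y := hq'
      have : g q' ∈ R q' := hg q'
      have hgy : (y : Fin h → ℤ) = g q' := by
        rw [← hGq']
      rw [hgy]
      exact hRanti (le_of_lt hq'gt) this
    refine (mem_hfold h hh).2 ⟨y, ?_, (hyall 0).2⟩
    intro i
    rw [hA]
    exact Set.mem_iInter.2 fun q => (hyall q).1 i
end

section
/- Let d ≥ 2, let (g_j)_{j≥1} be a strictly increasing sequence of positive integers, let G_q = g_1·g_2···g_q, and for each q ≥ 1 let A_q = {G_r : r ≥ q} ∪ {-(d-1)·G_r : r ≥ q} ⊆ ℤ. Then for every h ≥ 1, the intersection over q of hA_q equals {0} if d divides h, and is empty otherwise. -/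
/-!
Every element of `A_q` is a multiple of `G_q`, and `G_q → ∞`, so the intersection lies in `{0}`;
it contains `0` when `d ∣ h` because `d - 1` copies of `G_q` cancel `-(d - 1) G_q`.
Conversely, a zero sum of `h` elements of `A_q` reads `∑ c_i G_{r_i} = 0` with `c_i ∈ {1, 1 - d}`.
Grouping by level gives `∑_r C_r G_r = 0` with `|C_r| ≤ (d - 1) h < g_{r+1} = G_{r+1} / G_r` once
`q > d h`, so uniqueness of mixed-radix digits forces every `C_r = 0`. Hence `∑ c_i = 0`, while
`c_i ≡ 1 (mod d)` gives `∑ c_i ≡ h (mod d)`.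
-/

open Pointwise

lemma hfold_eq_nsmul {α : Type*} [AddMonoid α] (S : Set α) : ∀ {n : ℕ}, n ≠ 0 → hfold n S = n • S
  | 1, _ => (one_nsmul S).symm
  | n + 2, _ => by
    change hfold (n + 1) S + S = _
    rw [hfold_eq_nsmul S n.succ_ne_zero, ← succ_nsmul]

lemma Set.dvd_of_mem_nsmul {α : Type*} [Semiring α] {S : Set α} {m x : α} {n : ℕ}
    (hS : ∀ y ∈ S, m ∣ y) (hx : x ∈ n • S) : m ∣ x := by
  obtain ⟨f, hf, rfl⟩ := Set.mem_nsmul_iff_sum.mp hx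
  exact Finset.dvd_sum fun i _ => hS _ (hf i)

lemma Set.zero_mem_nsmul_of_dvd {α : Type*} [AddGroup α] {S : Set α} {a : α} {d n : ℕ}
    (ha : a ∈ S) (ha' : -((d - 1) • a) ∈ S) (hdn : d ∣ n) : (0 : α) ∈ n • S := by
  obtain ⟨k, rfl⟩ := hdn
  rw [mul_nsmul]
  refine Set.zero_mem_nsmul ?_
  cases d with
  | zero => exact Set.zero_mem_zero
  | succ d =>
    rw [succ_nsmul, ← add_neg_cancel (d • a)]
    exact Set.add_mem_add (Set.nsmul_mem_nsmul ha) (by simpa using ha')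

theorem eq_zero_of_sum_mul_eq_zero {s : Finset ℕ} {c G : ℕ → ℤ} (hG : ∀ r, 0 < G r)
    (hdvd : ∀ {r r'}, r ≤ r' → G r ∣ G r') (hsmall : ∀ r ∈ s, |c r| * G r < G (r + 1))
    (hsum : ∑ r ∈ s, c r * G r = 0) : ∀ r ∈ s, c r = 0 := by
  induction s using Finset.induction_on_min with
  | empty => simp
  | insert a s has ih =>
    rw [Finset.sum_insert fun ha => (has a ha).false] at hsum
    have htail : G (a + 1) ∣ ∑ r ∈ s, c r * G r :=
      Finset.dvd_sum fun r hr => (hdvd (has r hr)).mul_left _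
    have hhead : c a * G a = 0 := by
      refine Int.eq_zero_of_abs_lt_dvd (m := G (a + 1)) ?_ ?_
      · rwa [eq_neg_of_add_eq_zero_left hsum, dvd_neg]
      · rw [abs_mul, abs_of_pos (hG a)]
        exact hsmall a (Finset.mem_insert_self a s)
    rw [hhead, zero_add] at hsum
    intro r hr
    rcases Finset.mem_insert.mp hr with rfl | hr
    · exact (mul_eq_zero.mp hhead).resolve_right (hG r).ne'
    · exact ih (fun r hr => hsmall r (Finset.mem_insert_of_mem hr)) hsum r hr

theorem sum_eq_zero_of_sum_mul_eq_zero {ι : Type*} {s : Finset ι} {r : ι → ℕ} {c : ι → ℤ}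
    {G : ℕ → ℤ} (hG : ∀ r, 0 < G r) (hdvd : ∀ {r r'}, r ≤ r' → G r ∣ G r')
    (hsmall : ∀ i ∈ s, (∑ j ∈ s, |c j|) * G (r i) < G (r i + 1))
    (hsum : ∑ i ∈ s, c i * G (r i) = 0) : ∑ i ∈ s, c i = 0 := by
  classical
  have hmaps : ∀ i ∈ s, r i ∈ s.image r := fun i hi => Finset.mem_image_of_mem r hi
  have hlevel := eq_zero_of_sum_mul_eq_zero (c := fun v => ∑ i ∈ s with r i = v, c i) hG hdvd
    (s := s.image r) ?_ ?_
  · rw [← Finset.sum_fiberwise_of_maps_to hmaps]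
    exact Finset.sum_eq_zero hlevel
  · simp only [Finset.forall_mem_image]
    intro i hi
    calc |∑ j ∈ s with r j = r i, c j| * G (r i) ≤ (∑ j ∈ s, |c j|) * G (r i) := by
          gcongr
          · exact (hG _).le
          · exact (Finset.abs_sum_le_sum_abs _ _).trans
              (Finset.sum_le_sum_of_subset_of_nonneg (Finset.filter_subset _ _)
                fun _ _ _ => abs_nonneg _)
      _ < G (r i + 1) := hsmall i hi
  · rw [← hsum, ← Finset.sum_fiberwise_of_maps_to hmaps]
    refine Finset.sum_congr rfl fun v _ => ?_
    rw [Finset.sum_mul]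
    exact Finset.sum_congr rfl fun i hi => by rw [(Finset.mem_filter.mp hi).2]

theorem dvd_card_of_sum_eq_zero {ι : Type*} {s : Finset ι} {c : ι → ℤ} {d : ℕ}
    (hc : ∀ i ∈ s, c i ≡ 1 [ZMOD d]) (hsum : ∑ i ∈ s, c i = 0) : d ∣ s.card := by
  rw [← ZMod.natCast_eq_zero_iff]
  calc (s.card : ZMod d) = ∑ i ∈ s, ((c i : ℤ) : ZMod d) := by
        rw [Finset.card_eq_sum_ones, Nat.cast_sum, Nat.cast_one]
        exact Finset.sum_congr rfl fun i hi => by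
          rw [(ZMod.intCast_eq_intCast_iff _ _ _).mpr (hc i hi), Int.cast_one]
    _ = 0 := by rw [← Int.cast_sum, hsum, Int.cast_zero]

/-- The set `A_q`. -/
def tailSet (G : ℕ → ℤ) (d q : ℕ) : Set ℤ :=
  {x | ∃ r, q ≤ r ∧ (x = G r ∨ x = -(((d : ℤ) - 1) * G r))}

section tailSet

variable {G : ℕ → ℤ} {d q h : ℕ}

lemma dvd_of_mem_tailSet (hdvd : ∀ {r r'}, r ≤ r' → G r ∣ G r') {x : ℤ}
    (hx : x ∈ tailSet G d q) : G q ∣ x := by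
  obtain ⟨r, hqr, rfl | rfl⟩ := hx
  exacts [hdvd hqr, ((hdvd hqr).mul_left _).neg_right]

lemma zero_mem_nsmul_tailSet (hd : 1 ≤ d) (hdh : d ∣ h) :
    (0 : ℤ) ∈ h • tailSet G d q :=
  Set.zero_mem_nsmul_of_dvd (a := G q) ⟨q, le_rfl, .inl rfl⟩
    ⟨q, le_rfl, .inr (by rw [nsmul_eq_mul, Nat.cast_sub hd, Nat.cast_one])⟩ hdh

lemma dvd_of_zero_mem_nsmul_tailSet (hd : 2 ≤ d) (hG : ∀ r, 0 < G r)
    (hdvd : ∀ {r r'}, r ≤ r' → G r ∣ G r')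
    (hgrow : ∀ r, q ≤ r → ((d - 1) * h : ℤ) * G r < G (r + 1))
    (h0 : (0 : ℤ) ∈ h • tailSet G d q) : d ∣ h := by
  obtain ⟨f, hf, hsum⟩ := Set.mem_nsmul_iff_sum.mp h0
  have hrep : ∀ i, ∃ r, q ≤ r ∧ ∃ c : ℤ, (c = 1 ∨ c = 1 - d) ∧ f i = c * G r := by
    intro i
    obtain ⟨r, hqr, hfi | hfi⟩ := hf i
    exacts [⟨r, hqr, 1, .inl rfl, by rw [hfi, one_mul]⟩,
      ⟨r, hqr, 1 - d, .inr rfl, by rw [hfi]; ring⟩]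
  choose r hqr c hc hfc using hrep
  have hd' : (2 : ℤ) ≤ d := by exact_mod_cast hd
  have habs : ∑ j, |c j| ≤ (d - 1) * h := by
    calc ∑ j, |c j| ≤ ∑ _j : Fin h, ((d : ℤ) - 1) := Finset.sum_le_sum fun j _ => by
          rcases hc j with hcj | hcj <;> rw [hcj, abs_le] <;> constructor <;> linarith
      _ = (d - 1) * h := by
        rw [Finset.sum_const, Finset.card_univ, Fintype.card_fin, nsmul_eq_mul, mul_comm]
  have hcsum : ∑ i, c i = 0 := by
    refine sum_eq_zero_of_sum_mul_eq_zero (r := r) hG hdvd (fun i _ => ?_) ?_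
    · exact (mul_le_mul_of_nonneg_right habs (hG _).le).trans_lt (hgrow _ (hqr i))
    · simpa only [hfc] using hsum
  have hmod : ∀ i ∈ Finset.univ, c i ≡ 1 [ZMOD d] := fun i _ => by
    rcases hc i with hci | hci
    · rw [hci]
    · exact Int.modEq_iff_dvd.mpr ⟨1, by rw [hci]; ring⟩
  simpa using dvd_card_of_sum_eq_zero hmod hcsum

lemma iInter_nsmul_tailSet_subset (hG : ∀ r, 0 < G r)
    (hdvd : ∀ {r r'}, r ≤ r' → G r ∣ G r') (hgrow : ∀ r, (r + 1) * G r ≤ G (r + 1)) :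
    (⋂ q, ⋂ (_ : 1 ≤ q), h • tailSet G d q) ⊆ {0} := by
  intro x hx
  have hdvdx := Set.dvd_of_mem_nsmul (fun y hy => dvd_of_mem_tailSet hdvd hy)
    (Set.mem_iInter₂.mp hx (x.natAbs + 1) (by omega))
  refine Int.eq_zero_of_abs_lt_dvd hdvdx ?_
  have := hgrow x.natAbs
  have := hG x.natAbs
  rw [← Int.natCast_natAbs]
  nlinarith

lemma zero_mem_iInter_nsmul_tailSet_iff (hd : 2 ≤ d) (hG : ∀ r, 0 < G r)
    (hdvd : ∀ {r r'}, r ≤ r' → G r ∣ G r') (hgrow : ∀ r, (r + 1) * G r ≤ G (r + 1)) :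
    (0 : ℤ) ∈ (⋂ q, ⋂ (_ : 1 ≤ q), h • tailSet G d q) ↔ d ∣ h := by
  rw [Set.mem_iInter₂]
  refine ⟨fun h0 => dvd_of_zero_mem_nsmul_tailSet hd hG hdvd (fun r hr => ?_)
    (h0 (d * h + 1) (by omega)), fun hdh q _ => zero_mem_nsmul_tailSet (by omega) hdh⟩
  have hr' : (d : ℤ) * h + 1 ≤ r := by exact_mod_cast hr
  have := hgrow r
  have := hG r
  nlinarith

theorem iInter_nsmul_tailSet (hd : 2 ≤ d) (hG : ∀ r, 0 < G r)
    (hdvd : ∀ {r r'}, r ≤ r' → G r ∣ G r') (hgrow : ∀ r, (r + 1) * G r ≤ G (r + 1)) :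
    (⋂ q, ⋂ (_ : 1 ≤ q), h • tailSet G d q) = if d ∣ h then {0} else ∅ := by
  have hzero := zero_mem_iInter_nsmul_tailSet_iff (h := h) hd hG hdvd hgrow
  rcases Set.subset_singleton_iff_eq.mp (iInter_nsmul_tailSet_subset hG hdvd hgrow) with hI | hI <;>
    rw [hI] at hzero ⊢
  · rw [if_neg fun hdh => Set.notMem_empty _ (hzero.mpr hdh)]
  · rw [if_pos (hzero.mp (Set.mem_singleton 0))]

end tailSet

lemma add_one_le_apply_add_one {g : ℕ → ℕ} (h1 : 0 < g 1)
    (hg : ∀ j, 1 ≤ j → g j < g (j + 1)) : ∀ r, r + 1 ≤ g (r + 1)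
  | 0 => h1
  | r + 1 => (add_one_le_apply_add_one h1 hg r).trans_lt (hg _ r.succ_pos)

lemma add_one_mul_prod_Icc_le {g : ℕ → ℕ} (h1 : 0 < g 1)
    (hg : ∀ j, 1 ≤ j → g j < g (j + 1)) (r : ℕ) :
    (r + 1) * ∏ j ∈ Finset.Icc 1 r, g j ≤ ∏ j ∈ Finset.Icc 1 (r + 1), g j := by
  rw [Finset.prod_Icc_succ_top (by omega), mul_comm]
  exact Nat.mul_le_mul_left _ (add_one_le_apply_add_one h1 hg r)

theorem stmt15 (d : ℕ) (hd : 2 ≤ d) (g : ℕ → ℕ)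
    (hgpos : ∀ j, 1 ≤ j → 0 < g j) (hgmono : ∀ j, 1 ≤ j → g j < g (j + 1))
    (G : ℕ → ℕ) (hG : ∀ q, G q = ∏ j ∈ Finset.Icc 1 q, g j)
    (Aq : ℕ → Set ℤ)
    (hAq : ∀ q, Aq q = {x : ℤ | ∃ r : ℕ, q ≤ r ∧
      (x = (G r : ℤ) ∨ x = -(((d : ℤ) - 1) * (G r : ℤ)))}) :
    ∀ h : ℕ, 1 ≤ h →
      (⋂ q, ⋂ (_ : 1 ≤ q), hfold h (Aq q)) =
        if d ∣ h then ({0} : Set ℤ) else ∅ := by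
  intro h hh
  have hGpos : ∀ r, (0 : ℤ) < G r := fun r => by
    rw [hG, Nat.cast_pos]
    exact Finset.prod_pos fun j hj => hgpos j (Finset.mem_Icc.mp hj).1
  have hGdvd : ∀ {r r'}, r ≤ r' → (G r : ℤ) ∣ G r' := fun hrr' => by
    rw [hG, hG, Int.natCast_dvd_natCast]
    exact Finset.prod_dvd_prod_of_subset _ _ _ (Finset.Icc_subset_Icc_right hrr')
  have hGgrow : ∀ r : ℕ, ((r : ℤ) + 1) * G r ≤ G (r + 1) := fun r => by
    rw [hG, hG]
    exact_mod_cast add_one_mul_prod_Icc_le (hgpos 1 le_rfl) hgmono r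
  have hA : ∀ q, hfold h (Aq q) = h • tailSet (fun r => (G r : ℤ)) d q := fun q => by
    rw [hfold_eq_nsmul _ (by omega), hAq]; rfl
  simp only [hA]
  exact iInter_nsmul_tailSet hd hGpos hGdvd hGgrow
end
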